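/- In the Greedy Contraction Framework, the win of any full component never increases during the execution: for any full components C1, C2 one has save(M, C2) ≥ save(M/C1, C2) and save(M, C2) ≥ save(M/Loss(C1), C2). -/

import Mathlib

open Finset SimpleGraph

variable {V : Type*} [Fintype V] [DecidableEq V]

/-- Total cost of a finite set of edges. -/
def edgeCost (w : Sym2 V → ℝ) (T : Finset (Sym2 V)) : ℝ := ∑ e ∈ T, w e

/-- `T` is the edge set of a tree spanning exactly the vertex set `A`. -/
def IsTreeOn (A : Finset V) (T : Finset (Sym2 V)) : Prop :=
  (∀ e ∈ T, ∀ x ∈ e, x ∈ A) ∧ (∀ e ∈ T, ¬ e.IsDiag) ∧ T.card + 1 = A.card ∧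
    ∀ u ∈ A, ∀ v ∈ A, (SimpleGraph.fromEdgeSet (↑T : Set (Sym2 V))).Reachable u v

/-- Cost of a minimum spanning tree on vertex set `A` of the complete graph weighted by `w`. -/
noncomputable def mstCostOn (w : Sym2 V → ℝ) (A : Finset V) : ℝ :=
  sInf (edgeCost w '' {T | IsTreeOn A T})

/-- All (non-loop) pairs inside `S`. -/
def Rpairs (S : Finset V) : Set (Sym2 V) := {e | ∃ u ∈ S, ∃ v ∈ S, u ≠ v ∧ e = s(u, v)}

open Classical in
/-- Contracting the vertex set `S`: add zero-cost edges between all pairs of `S`. -/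
noncomputable def contractWeight (w : Sym2 V → ℝ) (S : Finset V) : Sym2 V → ℝ :=
  fun e => if e ∈ Rpairs S then 0 else w e

/-- `save(M, C)` where `M` is the complete graph on `A` weighted by `w` and
`S` is the terminal set of the full component `C`. -/
noncomputable def saveOn (w : Sym2 V → ℝ) (A S : Finset V) : ℝ :=
  mstCostOn w A - mstCostOn (contractWeight w S) A

/-- Vertices touched by an edge set. -/
def supportOf (T : Finset (Sym2 V)) : Finset V :=
  Finset.univ.filter (fun v => ∃ e ∈ T, v ∈ e)

/-- Degree of `v` in the edge set `T`. -/
def degIn (T : Finset (Sym2 V)) (v : V) : ℕ := (T.filter (fun e => v ∈ e)).card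

/-- `E` is a full component with vertex set `S` and terminal set `R`:
a tree on `S` whose set of leaves is exactly `R`. -/
def IsFullComponent (R S : Finset V) (E : Finset (Sym2 V)) : Prop :=
  IsTreeOn S E ∧ R ⊆ S ∧ ∀ v ∈ S, (degIn E v = 1 ↔ v ∈ R)

/-- The terminals of the component with edge set `E'` w.r.t. the global terminal set `R`. -/
def compR (R : Finset V) (E' : Finset (Sym2 V)) : Finset V := supportOf E' ∩ R

/-- `E'` is a full component w.r.t. the terminal set `R`. -/
def IsFullComponentOf (R : Finset V) (E' : Finset (Sym2 V)) : Prop :=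
  IsFullComponent (compR R E') (supportOf E') E'

/-- A Steiner tree for terminal set `R`: a tree containing all terminals. -/
def IsSteinerTree (R : Finset V) (T : Finset (Sym2 V)) : Prop :=
  IsTreeOn (supportOf T ∪ R) T

/-- `P` is a decomposition of the Steiner tree `T` into full components,
each with at most `k` terminals. -/
def KDecomposition (k : ℕ) (R : Finset V) (T : Finset (Sym2 V))
    (P : Finset (Finset (Sym2 V))) : Prop :=
  (∀ E' ∈ P, IsFullComponentOf R E' ∧ (compR R E').card ≤ k) ∧
  (∀ e ∈ T, ∃! E', E' ∈ P ∧ e ∈ E') ∧ (∀ E' ∈ P, E' ⊆ T)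

/-- `T` is a `k`-restricted Steiner tree. -/
def IsKRestricted (k : ℕ) (R : Finset V) (T : Finset (Sym2 V)) : Prop :=
  ∃ P, KDecomposition k R T P

/-! Contracting `C₁` and loss-contracting it both lower edge weights, so it suffices that the
save of a fixed component is monotone in the weights. By induction only one edge `e₀` is lowered.
Take minimum spanning trees `T` for the old weights and `T'` for the new contracted ones. Unless
`e₀` is an uncontracted edge of `T'` outside `T`, the pair `T, T'` already witnesses the
inequality. Otherwise exchange `e₀` with an edge `f` on the `T`-path between the ends of `e₀` that
crosses the cut of `T' - e₀`: then `T - f + e₀` and `T' - e₀ + f` are spanning trees of the same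
total cost, except that `f` is now charged at its contracted weight, which is no larger. -/

omit [Fintype V] [DecidableEq V] in
lemma fromEdgeSet_reachable_of_mem {E : Finset (Sym2 V)} {x y : V} (h : s(x, y) ∈ E) :
    (fromEdgeSet (E : Set (Sym2 V))).Reachable x y := by
  by_cases hxy : x = y
  · subst hxy; rfl
  · exact ((fromEdgeSet_adj _).2 ⟨h, hxy⟩).reachable

omit [Fintype V] [DecidableEq V] in
lemma fromEdgeSet_reachable_mono {E E' : Finset (Sym2 V)} (h : E ⊆ E') {a b : V}
    (hab : (fromEdgeSet (E : Set (Sym2 V))).Reachable a b) :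
    (fromEdgeSet (E' : Set (Sym2 V))).Reachable a b :=
  hab.mono (fromEdgeSet_mono (coe_subset.2 h))

omit [Fintype V] [DecidableEq V] in
lemma fromEdgeSet_reachable_of_forall_mem {E E' : Finset (Sym2 V)}
    (h : ∀ x y, s(x, y) ∈ E' → (fromEdgeSet (E : Set (Sym2 V))).Reachable x y) {a b : V}
    (hab : (fromEdgeSet (E' : Set (Sym2 V))).Reachable a b) :
    (fromEdgeSet (E : Set (Sym2 V))).Reachable a b := by
  rw [reachable_iff_reflTransGen] at hab ⊢
  refine Relation.reflTransGen_closed (fun x y hxy => ?_) _ _ hab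
  exact (reachable_iff_reflTransGen x y).1 (h x y ((fromEdgeSet_adj _).1 hxy).1)

omit [Fintype V] in
lemma SimpleGraph.Reachable.of_fromEdgeSet_erase {T E : Finset (Sym2 V)} {x y a b : V}
    (hab : (fromEdgeSet (T : Set (Sym2 V))).Reachable a b) (hsub : T.erase s(x, y) ⊆ E)
    (hxy : (fromEdgeSet (E : Set (Sym2 V))).Reachable x y) :
    (fromEdgeSet (E : Set (Sym2 V))).Reachable a b := by
  refine fromEdgeSet_reachable_of_forall_mem (fun p q hpq => ?_) hab
  by_cases h : s(p, q) = s(x, y)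
  · rcases Sym2.eq_iff.1 h with ⟨rfl, rfl⟩ | ⟨rfl, rfl⟩
    exacts [hxy, hxy.symm]
  · exact fromEdgeSet_reachable_of_mem (hsub (mem_erase.2 ⟨h, hpq⟩))

omit [Fintype V] in
lemma fromEdgeSet_reachable_insert {E : Finset (Sym2 V)} {u v a : V}
    (h : (fromEdgeSet (↑(insert s(u, v) E) : Set (Sym2 V))).Reachable u a) :
    (fromEdgeSet (E : Set (Sym2 V))).Reachable u a ∨
      (fromEdgeSet (E : Set (Sym2 V))).Reachable v a := by
  rw [reachable_iff_reflTransGen] at h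
  induction h with
  | refl => exact Or.inl .rfl
  | @tail b c _ hbc ih =>
    rcases mem_insert.1 (mem_coe.1 ((fromEdgeSet_adj _).1 hbc).1) with h | h
    · rcases Sym2.eq_iff.1 h with ⟨-, rfl⟩ | ⟨-, rfl⟩
      exacts [Or.inr .rfl, Or.inl .rfl]
    · have hbc := fromEdgeSet_reachable_of_mem h
      exact ih.imp (·.trans hbc) (·.trans hbc)

omit [Fintype V] in
lemma SimpleGraph.Walk.exists_crossing_edge {T : Finset (Sym2 V)} (P : V → Prop) {a b : V}
    (W : (fromEdgeSet (T : Set (Sym2 V))).Walk a b) (hW : W.IsTrail) (ha : P a) (hb : ¬ P b) :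
    ∃ x y, s(x, y) ∈ W.edges ∧ P x ∧ ¬ P y ∧
      (fromEdgeSet (T.erase s(x, y) : Set (Sym2 V))).Reachable a x ∧
      (fromEdgeSet (T.erase s(x, y) : Set (Sym2 V))).Reachable y b := by
  induction W with
  | nil => exact absurd ha hb
  | @cons a c b hac W ih =>
    obtain ⟨hW', hacW⟩ := (Walk.isTrail_cons _ _).1 hW
    have hacT : s(a, c) ∈ T := ((fromEdgeSet_adj _).1 hac).1
    by_cases hc : P c
    · obtain ⟨x, y, hxyW, hx, hy, hcx, hyb⟩ := ih hW' hc hb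
      have hne : s(a, c) ≠ s(x, y) := fun h => hacW (h ▸ hxyW)
      refine ⟨x, y, List.mem_cons_of_mem _ hxyW, hx, hy, ?_, hyb⟩
      exact (fromEdgeSet_reachable_of_mem (mem_erase.2 ⟨hne, hacT⟩)).trans hcx
    · refine ⟨a, c, List.mem_cons_self, ha, hc, .rfl, ?_⟩
      refine (W.transfer _ fun e he => ?_).reachable
      have he' := W.edges_subset_edgeSet he
      rw [edgeSet_fromEdgeSet] at he' ⊢
      exact ⟨mem_erase.2 ⟨fun h => hacW (h ▸ he), he'.1⟩, he'.2⟩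

lemma card_le_card_add_one_of_reachable {A : Finset V} {T : Finset (Sym2 V)}
    (hconn : ∀ u ∈ A, ∀ v ∈ A, (fromEdgeSet (T : Set (Sym2 V))).Reachable u v) :
    #A ≤ #T + 1 := by
  rcases A.eq_empty_or_nonempty with rfl | ⟨a, ha⟩
  · simp
  -- Join the vertices outside `A` to `a` by a star and count edges of the connected result.
  set S := T ∪ Aᶜ.image (fun v => s(a, v))
  have hS : (fromEdgeSet (S : Set (Sym2 V))).Connected := by
    refine (connected_iff_exists_forall_reachable _).2 ⟨a, fun v => ?_⟩
    by_cases hv : v ∈ A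
    · exact fromEdgeSet_reachable_mono subset_union_left (hconn a ha v hv)
    · exact fromEdgeSet_reachable_of_mem (mem_union_right _ (mem_image_of_mem _ (mem_compl.2 hv)))
  have hedges : Nat.card (fromEdgeSet (S : Set (Sym2 V))).edgeSet ≤ #T + #Aᶜ := by
    rw [edgeSet_fromEdgeSet, Nat.card_coe_set_eq]
    calc _ ≤ (S : Set (Sym2 V)).ncard := Set.ncard_le_ncard Set.sdiff_subset (Set.toFinite _)
      _ = #S := Set.ncard_coe_finset S
      _ ≤ #T + #(Aᶜ.image fun v => s(a, v)) := card_union_le _ _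
      _ ≤ #T + #Aᶜ := by gcongr; exact card_image_le
  have hcard := hS.card_vert_le_card_edgeSet_add_one
  rw [Nat.card_eq_fintype_card, ← card_add_card_compl A] at hcard
  omega

omit [Fintype V] in
lemma IsTreeOn.insert_erase {A : Finset V} {T : Finset (Sym2 V)} (hT : IsTreeOn A T)
    {x y : V} {g : Sym2 V} (hf : s(x, y) ∈ T) (hg : g ∉ T.erase s(x, y))
    (hgA : ∀ z ∈ g, z ∈ A) (hgd : ¬ g.IsDiag)
    (hxy : (fromEdgeSet (↑(insert g (T.erase s(x, y))) : Set (Sym2 V))).Reachable x y) :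
    IsTreeOn A (insert g (T.erase s(x, y))) := by
  obtain ⟨hTA, hTd, hcard, hconn⟩ := hT
  refine ⟨fun e he => ?_, fun e he => ?_, ?_,
    fun a ha b hb => (hconn a ha b hb).of_fromEdgeSet_erase (subset_insert _ _) hxy⟩
  · rcases mem_insert.1 he with rfl | he
    exacts [hgA, hTA e (mem_of_mem_erase he)]
  · rcases mem_insert.1 he with rfl | he
    exacts [hgd, hTd e (mem_of_mem_erase he)]
  · rwa [card_insert_of_notMem hg, card_erase_add_one hf]

lemma IsTreeOn.not_reachable_erase {A : Finset V} {T : Finset (Sym2 V)} (hT : IsTreeOn A T)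
    {u v : V} (he : s(u, v) ∈ T) :
    ¬ (fromEdgeSet (↑(T.erase s(u, v)) : Set (Sym2 V))).Reachable u v := by
  intro huv
  have hcard := card_le_card_add_one_of_reachable fun a ha b hb =>
    (hT.2.2.2 a ha b hb).of_fromEdgeSet_erase subset_rfl huv
  have := card_erase_add_one he
  have := hT.2.2.1
  omega

lemma IsTreeOn.exists_symmetric_exchange {A : Finset V} {T T' : Finset (Sym2 V)} (hT : IsTreeOn A T)
    (hT' : IsTreeOn A T') {e : Sym2 V} (heT' : e ∈ T') (heT : e ∉ T) :
    ∃ f ∈ T, f ∉ T'.erase e ∧ IsTreeOn A (insert e (T.erase f)) ∧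
      IsTreeOn A (insert f (T'.erase e)) := by
  induction e using Sym2.ind with | _ u v => ?_
  set E := T'.erase s(u, v)
  have huA : u ∈ A := hT'.1 _ heT' u (Sym2.mem_mk_left u v)
  have hvA : v ∈ A := hT'.1 _ heT' v (Sym2.mem_mk_right u v)
  have hcut := hT'.not_reachable_erase heT'
  have hside : ∀ a ∈ A, (fromEdgeSet (E : Set (Sym2 V))).Reachable u a ∨
      (fromEdgeSet (E : Set (Sym2 V))).Reachable v a := fun a ha =>
    fromEdgeSet_reachable_insert (by rw [Finset.insert_erase heT']; exact hT'.2.2.2 u huA a ha)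
  -- Walk along the tree path of `T` from `u` to `v` until it leaves the side of `u` in `T' - e`.
  obtain ⟨W⟩ := hT.2.2.2 u huA v hvA
  obtain ⟨x, y, hxyW, hux, hyu, hux', hyv'⟩ :=
    W.toPath.1.exists_crossing_edge _ W.toPath.2.isTrail (Reachable.refl u) hcut
  have hxyT : s(x, y) ∈ T := by
    have := W.toPath.1.edges_subset_edgeSet hxyW
    rw [edgeSet_fromEdgeSet] at this
    exact this.1
  have hxA : x ∈ A := hT.1 _ hxyT x (Sym2.mem_mk_left x y)
  have hyA : y ∈ A := hT.1 _ hxyT y (Sym2.mem_mk_right x y)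
  have hvy := (hside y hyA).resolve_left hyu
  have hxyE : s(x, y) ∉ E := fun h => hyu (hux.trans (fromEdgeSet_reachable_of_mem h))
  have hxy : x ≠ y := fun h => hyu (h ▸ hux)
  refine ⟨s(x, y), hxyT, hxyE, hT.insert_erase hxyT (fun h => heT (mem_of_mem_erase h))
    (fun z hz => ?_) (hT'.2.1 _ heT') ?_, hT'.insert_erase heT' hxyE (fun z hz => ?_)
    (Sym2.mk_isDiag_iff.not.2 hxy) ?_⟩
  · rcases Sym2.mem_iff.1 hz with rfl | rfl
    exacts [huA, hvA]
  · exact ((fromEdgeSet_reachable_mono (subset_insert _ _) hux').symm.trans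
      (fromEdgeSet_reachable_of_mem (mem_insert_self _ _))).trans
      (fromEdgeSet_reachable_mono (subset_insert _ _) hyv').symm
  · rcases Sym2.mem_iff.1 hz with rfl | rfl
    exacts [hxA, hyA]
  · exact ((fromEdgeSet_reachable_mono (subset_insert _ _) hux).trans
      (fromEdgeSet_reachable_of_mem (mem_insert_self _ _))).trans
      (fromEdgeSet_reachable_mono (subset_insert _ _) hvy).symm

omit [Fintype V] in
lemma exists_isTreeOn {A : Finset V} (hA : A.Nonempty) : ∃ T, IsTreeOn A T := by
  obtain ⟨a, ha⟩ := hA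
  have hstar : ∀ v ∈ A.erase a, s(a, v) ∈ (A.erase a).image (fun v => s(a, v)) :=
    fun v hv => mem_image_of_mem _ hv
  refine ⟨(A.erase a).image (fun v => s(a, v)), ?_, ?_, ?_, ?_⟩
  · simp only [forall_mem_image, Sym2.mem_iff]
    rintro v hv z (rfl | rfl)
    exacts [ha, mem_of_mem_erase hv]
  · simp only [forall_mem_image, Sym2.mk_isDiag_iff]
    exact fun v hv => (ne_of_mem_erase hv).symm
  · rw [card_image_of_injective _ fun _ _ h => Sym2.congr_right.1 h, card_erase_add_one ha]
  · have hreach : ∀ v ∈ A, (fromEdgeSet (↑((A.erase a).image (fun v => s(a, v))) :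
        Set (Sym2 V))).Reachable a v := fun v hv => by
      by_cases hva : v = a
      · rw [hva]
      · exact fromEdgeSet_reachable_of_mem (hstar v (mem_erase.2 ⟨hva, hv⟩))
    exact fun u hu v hv => (hreach u hu).symm.trans (hreach v hv)

omit [DecidableEq V] in
lemma mstCostOn_le {w : Sym2 V → ℝ} {A : Finset V} {T : Finset (Sym2 V)} (hT : IsTreeOn A T) :
    mstCostOn w A ≤ edgeCost w T :=
  csInf_le ((Set.toFinite _).image _).bddBelow ⟨T, hT, rfl⟩

lemma exists_edgeCost_eq_mstCostOn (w : Sym2 V → ℝ) {A : Finset V} (hA : A.Nonempty) :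
    ∃ T, IsTreeOn A T ∧ edgeCost w T = mstCostOn w A := by
  obtain ⟨T, hT⟩ := exists_isTreeOn hA
  exact (Set.Nonempty.image _ ⟨T, hT⟩).csInf_mem ((Set.toFinite _).image _)

omit [Fintype V] [DecidableEq V] in
lemma mstCostOn_empty (w : Sym2 V → ℝ) : mstCostOn w ∅ = 0 := by
  have : {T : Finset (Sym2 V) | IsTreeOn ∅ T} = ∅ :=
    Set.eq_empty_of_forall_notMem fun T hT => by simpa using hT.2.2.1
  rw [mstCostOn, this, Set.image_empty, Real.sInf_empty]

omit [Fintype V] in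
lemma edgeCost_insert_erase (w : Sym2 V → ℝ) {T : Finset (Sym2 V)} {f g : Sym2 V} (hf : f ∈ T)
    (hg : g ∉ T.erase f) :
    edgeCost w (insert g (T.erase f)) = edgeCost w T - w f + w g := by
  have := sum_erase_add T w hf
  rw [edgeCost, edgeCost, sum_insert hg]
  linarith

omit [Fintype V] in
lemma edgeCost_eq_add_of_eq_off {w w' : Sym2 V → ℝ} {e₀ : Sym2 V} (h : ∀ e ≠ e₀, w' e = w e)
    (T : Finset (Sym2 V)) :
    edgeCost w T = edgeCost w' T + if e₀ ∈ T then w e₀ - w' e₀ else 0 := by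
  rw [edgeCost, edgeCost, ← sub_eq_iff_eq_add', ← sum_sub_distrib]
  split_ifs with he₀
  · exact sum_eq_single_of_mem _ he₀ fun e _ he => by rw [h e he, sub_self]
  · exact sum_eq_zero fun e he => by rw [h e (ne_of_mem_of_not_mem he he₀), sub_self]

omit [Fintype V] [DecidableEq V] in
lemma contractWeight_of_notMem (w : Sym2 V → ℝ) {S : Finset V} {e : Sym2 V}
    (he : e ∉ Rpairs S) : contractWeight w S e = w e :=
  if_neg he

omit [Fintype V] [DecidableEq V] in
lemma contractWeight_nonneg {w : Sym2 V → ℝ} (hw : 0 ≤ w) (S : Finset V) :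
    0 ≤ contractWeight w S := fun e => by
  unfold contractWeight
  split_ifs
  exacts [le_rfl, hw e]

omit [Fintype V] [DecidableEq V] in
lemma contractWeight_le {w : Sym2 V → ℝ} (hw : 0 ≤ w) (S : Finset V) :
    contractWeight w S ≤ w := fun e => by
  unfold contractWeight
  split_ifs
  exacts [hw e, le_rfl]

lemma saveOn_le_of_eq_off {w w' : Sym2 V → ℝ} {e₀ : Sym2 V} (A S : Finset V) (hw : 0 ≤ w)
    (hle : w' e₀ ≤ w e₀) (heq : ∀ e ≠ e₀, w' e = w e) : saveOn w' A S ≤ saveOn w A S := by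
  rcases A.eq_empty_or_nonempty with rfl | hA
  · simp [saveOn, mstCostOn_empty]
  obtain ⟨T, hT, hTw⟩ := exists_edgeCost_eq_mstCostOn w hA
  obtain ⟨T', hT', hT'w⟩ := exists_edgeCost_eq_mstCostOn (contractWeight w' S) hA
  have hceq : ∀ e ≠ e₀, contractWeight w' S e = contractWeight w S e := fun e he => by
    simp only [contractWeight, heq e he]
  have hcost := edgeCost_eq_add_of_eq_off heq T
  have hcost' := edgeCost_eq_add_of_eq_off hceq T'
  unfold saveOn
  by_cases hex : e₀ ∈ T' ∧ e₀ ∉ Rpairs S ∧ e₀ ∉ T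
  · obtain ⟨he₀T', he₀S, he₀T⟩ := hex
    obtain ⟨f, hfT, hfE, hT₁, hT₂⟩ := hT.exists_symmetric_exchange hT' he₀T' he₀T
    have h₁ := mstCostOn_le (w := w') hT₁
    have h₂ := mstCostOn_le (w := contractWeight w S) hT₂
    rw [edgeCost_insert_erase _ hfT fun h => he₀T (mem_of_mem_erase h),
      heq f fun h => he₀T (h ▸ hfT)] at h₁
    rw [edgeCost_insert_erase _ he₀T' hfE] at h₂
    have hf := contractWeight_le hw S f
    simp only [he₀T, he₀T', if_true, if_false, contractWeight_of_notMem _ he₀S] at hcost hcost' h₂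
    linarith
  · have hgain : (if e₀ ∈ T' then contractWeight w S e₀ - contractWeight w' S e₀ else 0) ≤
        if e₀ ∈ T then w e₀ - w' e₀ else 0 := by
      by_cases he₀S : e₀ ∈ Rpairs S
      · simp only [contractWeight, he₀S, if_true, sub_self, ite_self]
        split_ifs <;> linarith
      · rw [contractWeight_of_notMem _ he₀S, contractWeight_of_notMem _ he₀S]
        split_ifs <;> first | linarith | tauto
    linarith [mstCostOn_le (w := w') hT, mstCostOn_le (w := contractWeight w S) hT']

lemma saveOn_mono {w w' : Sym2 V → ℝ} (A S : Finset V) (hw' : 0 ≤ w') (hle : w' ≤ w) :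
    saveOn w' A S ≤ saveOn w A S := by
  suffices key : ∀ s : Finset (Sym2 V), ∀ w', 0 ≤ w' → w' ≤ w → (∀ e ∉ s, w' e = w e) →
      saveOn w' A S ≤ saveOn w A S from key univ w' hw' hle (by simp)
  intro s
  induction s using Finset.induction_on with
  | empty =>
    intro w' _ _ hoff
    rw [funext fun e => hoff e (notMem_empty e)]
  | insert a s _ ih =>
    intro w' hw' hle hoff
    have hmid : w' ≤ Function.update w' a (w a) := le_update_iff.2 ⟨hle a, fun _ _ => le_rfl⟩
    calc saveOn w' A S ≤ saveOn (Function.update w' a (w a)) A S :=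
          saveOn_le_of_eq_off A S (hw'.trans hmid) (hmid a) fun e he => by simp [he]
      _ ≤ saveOn w A S := ih _ (hw'.trans hmid) (update_le_iff.2 ⟨le_rfl, fun e _ => hle e⟩)
          fun e he => by
            by_cases hea : e = a
            · simp [hea]
            · simpa [hea] using hoff e (by simp [hea, he])

/-- `M/C₁` is `contractWeight w S₁`; `M/Loss(C₁)` is `fun e => min (w e) (f e)`, where `f` carries
the weights of the non-loss edges of `C₁`. -/
theorem win_never_increases_general
    (w f : Sym2 V → ℝ) (hw : ∀ e, 0 ≤ w e) (hf0 : ∀ e, 0 ≤ f e)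
    (R S₁ S₂ : Finset V) :
    saveOn (contractWeight w S₁) R S₂ ≤ saveOn w R S₂ ∧
    saveOn (fun e => min (w e) (f e)) R S₂ ≤ saveOn w R S₂ :=
  ⟨saveOn_mono R S₂ (contractWeight_nonneg hw S₁) (contractWeight_le hw S₁),
    saveOn_mono R S₂ (fun e => le_min (hw e) (hf0 e)) fun _ => min_le_left _ _⟩

/-- In the Greedy Contraction Framework the win (save) of a full
component never increases: for full components `C₁` (with terminal set `S₁`) and
`C₂` (with terminal set `S₂`), both `save(M, C₂) ≥ save(M/C₁, C₂)` and
`save(M, C₂) ≥ save(M/Loss(C₁), C₂)`.  The contraction `M/C₁` is modeled by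
`contractWeight w S₁` (zero-cost edges among `S₁`), and the loss-contraction
`M/Loss(C₁)` is modeled by lowering the weights only on pairs of terminals of
`C₁` to some nonnegative values `f` (adding the non-loss edges of `C₁`). -/
theorem win_never_increases
    (w f : Sym2 V → ℝ) (hw : ∀ e, 0 ≤ w e) (hf0 : ∀ e, 0 ≤ f e)
    (R S₁ S₂ : Finset V) (hS₁ : S₁ ⊆ R) (hS₂ : S₂ ⊆ R)
    (hf : ∀ e, e ∉ Rpairs S₁ → f e = w e) :
    saveOn (contractWeight w S₁) R S₂ ≤ saveOn w R S₂ ∧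
    saveOn (fun e => min (w e) (f e)) R S₂ ≤ saveOn w R S₂ :=
  win_never_increases_general w f hw hf0 R S₁ S₂
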